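/- Let p, q ≥ 1 be coprime integers with p + q ≥ 3 and let f = x^p·y^q ∈ ℂ[x,y]. Then for all natural numbers a, b, the class of the monomial x^a·y^b in the Brieskorn module B(f) = ℂ[x,y]/D_f is a torsion element annihilated by t if and only if p(b+1) ≠ q(a+1); that is, f·x^a·y^b ∈ D_f if and only if p(b+1) ≠ q(a+1). -/

import Mathlib

/-!
Multiplying the bracket `f_x g_y - f_y g_x` by `x y` and using Euler's identities
`x f_x = p f`, `y f_y = q f` for `f = x^p y^q` gives
`x y (f_x g_y - f_y g_x) = f (p y g_y - q x g_x)`.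
Since `ℂ[x,y]` is a domain, `f x^a y^b ∈ D_f` iff `x^(a+1) y^(b+1)` lies in the image of the
weighted Euler operator `p y ∂_y - q x ∂_x`, which is diagonal on monomials and multiplies
`x^(a+1) y^(b+1)` by `p (b+1) - q (a+1)`.
-/

open MvPolynomial

/-- Membership in `D_f = {f_x·∂g/∂y − f_y·∂g/∂x : g ∈ ℂ[x,y]}`. -/
def Dmem (f w : MvPolynomial (Fin 2) ℂ) : Prop :=
  ∃ g : MvPolynomial (Fin 2) ℂ,
    w = pderiv 0 f * pderiv 1 g - pderiv 1 f * pderiv 0 g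

namespace MvPolynomial

section WeightedEuler

variable {R σ : Type*} [CommSemiring R] [Fintype σ]

noncomputable def weightedEuler (w : σ → R) (φ : MvPolynomial σ R) : MvPolynomial σ R :=
  ∑ i, w i • (X i * pderiv i φ)

theorem weightedEuler_monomial (w : σ → R) (m : σ →₀ ℕ) (r : R) :
    weightedEuler w (monomial m r) = (∑ i, w i * m i) • monomial m r := by
  simp only [weightedEuler, X_mul_pderiv_monomial, ← Nat.cast_smul_eq_nsmul R, smul_smul,
    Finset.sum_smul]

theorem coeff_weightedEuler (w : σ → R) (φ : MvPolynomial σ R) (m : σ →₀ ℕ) :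
    coeff m (weightedEuler w φ) = (∑ i, w i * m i) * coeff m φ := by
  induction φ using MvPolynomial.induction_on' with
  | monomial n r =>
    classical
    rw [weightedEuler_monomial, coeff_smul, coeff_monomial]
    split_ifs with h
    · rw [h, smul_eq_mul]
    · simp
  | add φ ψ hφ hψ =>
    simp only [weightedEuler, map_add, mul_add, smul_add, Finset.sum_add_distrib, coeff_add] at *
    rw [hφ, hψ]

theorem exists_weightedEuler_eq_monomial_iff {K : Type*} [Field K] (w : σ → K)
    (m : σ →₀ ℕ) :
    (∃ φ, weightedEuler w φ = monomial m 1) ↔ ∑ i, w i * m i ≠ 0 := by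
  constructor
  · rintro ⟨φ, hφ⟩ h
    classical
    simpa [coeff_weightedEuler, h, coeff_monomial] using congrArg (coeff m) hφ.symm
  · intro h
    refine ⟨monomial m (∑ i, w i * m i)⁻¹, ?_⟩
    rw [weightedEuler_monomial, smul_monomial, smul_eq_mul, mul_inv_cancel₀ h]

end WeightedEuler

theorem X_mul_X_mul_jacobian_monomial {R : Type*} [CommRing R] (s : Fin 2 →₀ ℕ) (r : R)
    (g : MvPolynomial (Fin 2) R) :
    X 0 * X 1 * (pderiv 0 (monomial s r) * pderiv 1 g - pderiv 1 (monomial s r) * pderiv 0 g) =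
      monomial s r * weightedEuler ![-(s 1 : R), s 0] g := by
  have euler (i : Fin 2) : X i * pderiv i (monomial s r) = C (s i : R) * monomial s r := by
    rw [X_mul_pderiv_monomial, ← Nat.cast_smul_eq_nsmul R, smul_eq_C_mul]
  calc X 0 * X 1 * (pderiv 0 (monomial s r) * pderiv 1 g - pderiv 1 (monomial s r) * pderiv 0 g)
      = X 0 * pderiv 0 (monomial s r) * (X 1 * pderiv 1 g)
          - X 1 * pderiv 1 (monomial s r) * (X 0 * pderiv 0 g) := by ring
    _ = monomial s r * weightedEuler ![-(s 1 : R), s 0] g := by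
      simp only [euler, weightedEuler, Fin.sum_univ_two, smul_eq_C_mul, Matrix.cons_val_zero,
        Matrix.cons_val_one, map_neg]
      ring

theorem X_pow_mul_X_pow_eq_monomial {R σ : Type*} [CommSemiring R] (i j : σ) (m n : ℕ) :
    (X i ^ m * X j ^ n : MvPolynomial σ R) =
      monomial (Finsupp.single i m + Finsupp.single j n) 1 := by
  rw [X_pow_eq_monomial, X_pow_eq_monomial, monomial_mul, one_mul]

end MvPolynomial

theorem statement11 (p q : ℕ) (a b : ℕ) :
    Dmem (X 0 ^ p * X 1 ^ q) ((X 0 ^ p * X 1 ^ q : MvPolynomial (Fin 2) ℂ) * (X 0 ^ a * X 1 ^ b))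
      ↔ p * (b + 1) ≠ q * (a + 1) := by
  have hxy : (X 0 * X 1 : MvPolynomial (Fin 2) ℂ) ≠ 0 := mul_ne_zero (X_ne_zero 0) (X_ne_zero 1)
  have hm : (X 0 * X 1 * (X 0 ^ a * X 1 ^ b) : MvPolynomial (Fin 2) ℂ) =
      monomial (Finsupp.single 0 (a + 1) + Finsupp.single 1 (b + 1)) 1 := by
    rw [← X_pow_mul_X_pow_eq_monomial]; ring
  rw [Dmem, X_pow_mul_X_pow_eq_monomial]
  calc
    _ ↔ ∃ g, weightedEuler ![-(q : ℂ), p] g =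
        monomial (Finsupp.single 0 (a + 1) + Finsupp.single 1 (b + 1)) 1 := by
      refine exists_congr fun g => ?_
      rw [← mul_right_inj' hxy, X_mul_X_mul_jacobian_monomial, mul_left_comm, hm,
        mul_right_inj' (by simp), eq_comm]
      simp
    _ ↔ p * (b + 1) ≠ q * (a + 1) := by
      have weight : ∑ i, ![-(q : ℂ), p] i *
            (Finsupp.single 0 (a + 1) + Finsupp.single 1 (b + 1) : Fin 2 →₀ ℕ) i
          = ((p * (b + 1) : ℕ) : ℂ) - (q * (a + 1) : ℕ) := by
        simp only [Fin.sum_univ_two, Finsupp.add_apply, Finsupp.single_apply, Matrix.cons_val_zero,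
          Matrix.cons_val_one, Matrix.cons_val_fin_one]
        norm_num
        ring
      rw [exists_weightedEuler_eq_monomial_iff, weight, sub_ne_zero, Ne, Nat.cast_inj]
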